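/- arXiv:1806.04270 — 2 statements merged into one kernel-verified Lean document; each statement's English description precedes it below -/
import Mathlib

section
/- Let K ≥ 1, let c : Fin (K+1) → ℝ satisfy c k > 0 for every k, and let n : Fin (K+1) → ℕ. Let T_K = {x : Fin K → ℝ | ∀ i, 0 ≤ x i and ∑_i x i ≤ 1}, with Lebesgue (volume) measure, and write σ(x) = ∑_i x i, S = ∑_k c k, N = ∑_k n k. Then ∫_{x ∈ T_K} (Γ(S) / ∏_k Γ(c k)) · (∏_{i : Fin K} (x i)^{n i + c i − 1}) · (1 − σ(x))^{n K + c K − 1} dx = (Γ(S) / ∏_k Γ(c k)) · (∏_k Γ(n k + c k)) / Γ(N + S). -/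
open Real Finset MeasureTheory
open scoped ENNReal

lemma betaInt_integrable {α β r : ℝ} (hα : 0 < α) (hβ : 0 < β) (hr : 0 < r) :
    IntervalIntegrable (fun t => t ^ (α - 1) * (r - t) ^ (β - 1)) volume 0 r := by
  have h1 : IntervalIntegrable (fun t => t ^ (α - 1) * (r - t) ^ (β - 1)) volume 0 (r/2) := by
    apply IntervalIntegrable.mul_continuousOn
    · exact intervalIntegral.intervalIntegrable_rpow' (by linarith)
    · apply ContinuousOn.rpow_const (by fun_prop)
      intro t ht
      rw [Set.uIcc_of_le (by linarith)] at ht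
      left
      have := ht.2
      intro h; nlinarith [ht.1, ht.2]
  have h2 : IntervalIntegrable (fun t => t ^ (α - 1) * (r - t) ^ (β - 1)) volume (r/2) r := by
    have hint : IntervalIntegrable (fun t => (r - t) ^ (β - 1)) volume (r/2) r := by
      have := ((intervalIntegral.intervalIntegrable_rpow' (show (-1:ℝ) < β - 1 by linarith)
        (a := 0) (b := r/2)).comp_sub_left r).symm
      have e : r - r / 2 = r/2 := by ring
      have e2 : r - 0 = r := by ring
      rwa [e, e2] at this
    have := hint.continuousOn_mul (g := fun t => t ^ (α - 1)) ?_
    · simpa [mul_comm] using this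
    · apply ContinuousOn.rpow_const (by fun_prop)
      intro t ht
      rw [Set.uIcc_of_le (by linarith)] at ht
      left; nlinarith [ht.1]
  exact h1.trans h2

lemma betaInt_value {α β r : ℝ} (hα : 0 < α) (hβ : 0 < β) (hr : 0 < r) :
    ∫ t in (0:ℝ)..r, t ^ (α - 1) * (r - t) ^ (β - 1)
      = r ^ (α + β - 1) * (Gamma α * Gamma β / Gamma (α + β)) := by
  have hGne : Complex.Gamma ((α : ℂ) + (β : ℂ)) ≠ 0 := by
    rw [show ((α : ℂ) + (β : ℂ)) = ((α + β : ℝ) : ℂ) by push_cast; ring, Complex.Gamma_ofReal]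
    exact_mod_cast (Real.Gamma_pos_of_pos (by linarith)).ne'
  have hne : ((Gamma (α + β) : ℝ) : ℂ) ≠ 0 :=
    (Complex.ofReal_ne_zero).mpr (Real.Gamma_pos_of_pos (by linarith)).ne'
  have hB : Complex.betaIntegral (α : ℂ) (β : ℂ)
      = ((Gamma α * Gamma β / Gamma (α + β) : ℝ) : ℂ) := by
    have h := Complex.Gamma_mul_Gamma_eq_betaIntegral
      (s := (α : ℂ)) (t := (β : ℂ)) (by simpa using hα) (by simpa using hβ)
    rw [show ((α : ℂ) + (β : ℂ)) = ((α + β : ℝ) : ℂ) by push_cast; ring,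
      Complex.Gamma_ofReal, Complex.Gamma_ofReal, Complex.Gamma_ofReal] at h
    push_cast
    rw [eq_div_iff hne]
    linear_combination -h
  have hS := Complex.betaIntegral_scaled (α : ℂ) (β : ℂ) hr
  have hL : (∫ x in (0:ℝ)..r, (x : ℂ) ^ ((α : ℂ) - 1) * ((r : ℂ) - x) ^ ((β : ℂ) - 1))
      = ((∫ t in (0:ℝ)..r, t ^ (α - 1) * (r - t) ^ (β - 1) : ℝ) : ℂ) := by
    rw [← intervalIntegral.integral_ofReal]
    apply intervalIntegral.integral_congr
    intro x hx
    rw [Set.uIcc_of_le hr.le] at hx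
    push_cast
    rw [Complex.ofReal_cpow hx.1, Complex.ofReal_cpow (show (0:ℝ) ≤ r - x by linarith [hx.2])]
    push_cast; ring
  rw [hL, hB] at hS
  have hR : ((r : ℂ)) ^ ((α : ℂ) + (β : ℂ) - 1) = ((r ^ (α + β - 1) : ℝ) : ℂ) := by
    rw [Complex.ofReal_cpow hr.le]; push_cast; ring_nf
  rw [hR, ← Complex.ofReal_mul] at hS
  exact_mod_cast hS

lemma betaInt_lintegral {α β r : ℝ} (hα : 0 < α) (hβ : 0 < β) (hr : 0 < r) :
    ∫⁻ t in Set.Ioc 0 r, ENNReal.ofReal (t ^ (α - 1) * (r - t) ^ (β - 1))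
      = ENNReal.ofReal (r ^ (α + β - 1) * (Gamma α * Gamma β / Gamma (α + β))) := by
  rw [← betaInt_value hα hβ hr, intervalIntegral.integral_of_le hr.le,
    ← ofReal_integral_eq_lintegral_ofReal]
  · exact ((betaInt_integrable hα hβ hr).1)
  · refine ae_restrict_of_forall_mem measurableSet_Ioc fun t ht => ?_
    exact mul_nonneg (Real.rpow_nonneg ht.1.le _)
      (Real.rpow_nonneg (by linarith [ht.2]) _)

lemma hplane_null (K : ℕ) : volume {y : Fin K → ℝ | ∑ i, y i = 1} = 0 := by
  set L : (Fin K → ℝ) →ₗ[ℝ] ℝ := ∑ i, LinearMap.proj i with hL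
  have hLa : ∀ y, L y = ∑ i, y i := by
    intro y; simp [hL, LinearMap.sum_apply]
  have hne : (AffineSubspace.comap L.toAffineMap (AffineSubspace.mk' (1:ℝ)
      (⊥ : Submodule ℝ ℝ))) ≠ ⊤ := by
    intro h
    have h0 : (0 : Fin K → ℝ) ∈ (AffineSubspace.comap L.toAffineMap
        (AffineSubspace.mk' (1:ℝ) (⊥ : Submodule ℝ ℝ))) := by
      rw [h]; trivial
    rw [AffineSubspace.mem_comap, AffineSubspace.mem_mk'] at h0
    simp [hLa] at h0
  have h0 := Measure.addHaar_affineSubspace (volume : Measure (Fin K → ℝ)) _ hne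
  refine measure_mono_null (fun y hy => ?_) h0
  rw [SetLike.mem_coe, AffineSubspace.mem_comap, AffineSubspace.mem_mk']
  simp [hLa, hy.out]


lemma simplex_measurableSet (K : ℕ) :
    MeasurableSet {x : Fin K → ℝ | (∀ i, 0 ≤ x i) ∧ ∑ i, x i ≤ 1} := by
  have : {x : Fin K → ℝ | (∀ i, 0 ≤ x i) ∧ ∑ i, x i ≤ 1} =
      (⋂ i, {x | 0 ≤ x i}) ∩ {x | ∑ i, x i ≤ 1} := by ext x; simp [Set.mem_iInter]
  rw [this]
  exact (MeasurableSet.iInter fun i =>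
      measurableSet_le measurable_const (measurable_pi_apply i)).inter
    (measurableSet_le (by fun_prop) measurable_const)

lemma integrand_measurable {K : ℕ} (a : Fin K → ℝ) (b : ℝ) :
    Measurable fun x : Fin K → ℝ =>
      (∏ i, x i ^ (a i - 1)) * (1 - ∑ i, x i) ^ (b - 1) := by fun_prop

lemma dirichlet_lintegral :
    ∀ (K : ℕ) (a : Fin K → ℝ), (∀ i, 0 < a i) → ∀ (b : ℝ), 0 < b →
    ∫⁻ x in {x : Fin K → ℝ | (∀ i, 0 ≤ x i) ∧ ∑ i, x i ≤ 1},
        ENNReal.ofReal ((∏ i, x i ^ (a i - 1)) * (1 - ∑ i, x i) ^ (b - 1))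
      = ENNReal.ofReal ((∏ i, Gamma (a i)) * Gamma b / Gamma ((∑ i, a i) + b)) := by
  intro K
  induction K with
  | zero =>
    intro a ha b hb
    have hset : {x : Fin 0 → ℝ | (∀ i, 0 ≤ x i) ∧ ∑ i, x i ≤ 1} = Set.univ := by
      ext x; simp
    rw [hset, Measure.restrict_univ]
    simp only [Finset.univ_eq_empty, Finset.prod_empty, Finset.sum_empty, one_mul, sub_zero,
      Real.one_rpow, zero_add]
    rw [lintegral_const]
    have h1 : (volume : Measure (Fin 0 → ℝ)) Set.univ = 1 := by
      rw [MeasureTheory.volume_pi, Measure.pi_univ]; simp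
    rw [h1, mul_one, div_self (Real.Gamma_pos_of_pos hb).ne']
  | succ K IH =>
    intro a ha b hb
    set α : ℝ := a (Fin.last K) with hαdef
    have hα0 : 0 < α := ha _
    have hαb : 0 < α + b := by linarith
    set a' : Fin K → ℝ := fun j => a j.castSucc with ha'
    set T : Set (Fin (K+1) → ℝ) := {x | (∀ i, 0 ≤ x i) ∧ ∑ i, x i ≤ 1} with hT
    have hTm : MeasurableSet T := simplex_measurableSet (K+1)
    set T' : Set (Fin K → ℝ) := {y | (∀ i, 0 ≤ y i) ∧ ∑ i, y i ≤ 1} with hT'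
    have hT'm : MeasurableSet T' := simplex_measurableSet K
    set f : (Fin (K+1) → ℝ) → ℝ≥0∞ := fun x =>
      ENNReal.ofReal ((∏ i, x i ^ (a i - 1)) * (1 - ∑ i, x i) ^ (b - 1)) with hf
    have hfm : Measurable f := ENNReal.measurable_ofReal.comp (integrand_measurable a b)
    set e := MeasurableEquiv.piFinSuccAbove (fun _ : Fin (K+1) => ℝ) (Fin.last K) with he
    have hmp : MeasurePreserving e.symm
        ((volume : Measure ℝ).prod (volume : Measure (Fin K → ℝ))) volume := by
      have h := volume_preserving_piFinSuccAbove (fun _ : Fin (K+1) => ℝ) (Fin.last K)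
      exact (MeasurePreserving.symm e h)
    have hesymm : ∀ p : ℝ × (Fin K → ℝ), e.symm p = Fin.snoc p.2 p.1 := by
      intro p
      show (Fin.insertNthEquiv (fun _ => ℝ) (Fin.last K)) p = _
      rw [Fin.insertNthEquiv_last]
      rfl
    calc ∫⁻ x in T, f x = ∫⁻ x, T.indicator f x := (lintegral_indicator hTm f).symm
      _ = ∫⁻ p, T.indicator f (e.symm p)
            ∂((volume : Measure ℝ).prod (volume : Measure (Fin K → ℝ))) :=
        (hmp.lintegral_comp (hfm.indicator hTm)).symm
      _ = ∫⁻ y, ∫⁻ t, T.indicator f (e.symm (t, y)) := by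
        exact lintegral_prod_symm _ (((hfm.indicator hTm).comp e.symm.measurable).aemeasurable)
      _ = ∫⁻ y, T'.indicator (fun y => ENNReal.ofReal
            ((∏ j, y j ^ (a' j - 1)) * (1 - ∑ j, y j) ^ (α + b - 1) *
              (Gamma α * Gamma b / Gamma (α + b)))) y := by
        apply lintegral_congr_ae
        have hae : ∀ᵐ y : Fin K → ℝ, ∑ j, y j ≠ 1 := by
          rw [ae_iff]
          simpa using hplane_null K
        filter_upwards [hae] with y hy1
        have hmem : ∀ t : ℝ, (Fin.snoc y t ∈ T) ↔
            ((∀ j, 0 ≤ y j) ∧ 0 ≤ t ∧ (∑ j, y j) + t ≤ 1) := by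
          intro t
          simp only [hT, Set.mem_setOf_eq, Fin.sum_univ_castSucc, Fin.snoc_castSucc,
            Fin.snoc_last]
          constructor
          · rintro ⟨h1, h2⟩
            exact ⟨fun j => by simpa using h1 j.castSucc, by simpa using h1 (Fin.last K), h2⟩
          · rintro ⟨h1, h2, h3⟩
            refine ⟨fun i => ?_, h3⟩
            induction i using Fin.lastCases with
            | last => simpa using h2
            | cast j => simpa using h1 j
        have hval : ∀ t : ℝ, f (Fin.snoc y t) = ENNReal.ofReal
            ((∏ j, y j ^ (a' j - 1)) * (t ^ (α - 1) * ((1 - ∑ j, y j) - t) ^ (b - 1))) := by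
          intro t
          simp only [hf, Fin.prod_univ_castSucc, Fin.sum_univ_castSucc, Fin.snoc_castSucc,
            Fin.snoc_last, ha', hαdef]
          rw [show (1:ℝ) - (∑ j : Fin K, y j + t) = (1 - ∑ j, y j) - t by ring]
          congr 1
          ring
        by_cases hy : (∀ j, 0 ≤ y j) ∧ ∑ j, y j ≤ 1
        · have hs1 : ∑ j, y j < 1 := lt_of_le_of_ne hy.2 hy1
          set s : ℝ := ∑ j, y j with hs
          set C : ℝ := ∏ j, y j ^ (a' j - 1) with hC
          have hC0 : 0 ≤ C := Finset.prod_nonneg fun j _ => Real.rpow_nonneg (hy.1 j) _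
          have hinner : (fun t => T.indicator f (e.symm (t, y)))
              = (Set.Icc (0:ℝ) (1 - s)).indicator
                (fun t => ENNReal.ofReal (C * (t ^ (α - 1) * ((1 - s) - t) ^ (b - 1)))) := by
            funext t
            rw [hesymm]
            by_cases ht : t ∈ Set.Icc (0:ℝ) (1 - s)
            · rw [Set.indicator_of_mem ht, Set.indicator_of_mem, hval]
              rw [hmem]
              exact ⟨hy.1, ht.1, by linarith [ht.2]⟩
            · rw [Set.indicator_of_notMem ht, Set.indicator_of_notMem]
              rw [hmem]
              rintro ⟨-, h2, h3⟩
              exact ht ⟨h2, by linarith⟩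
          rw [hinner, lintegral_indicator measurableSet_Icc,
            ← Measure.restrict_congr_set Ioc_ae_eq_Icc]
          have hr : 0 < 1 - s := by linarith
          calc ∫⁻ t in Set.Ioc 0 (1 - s),
                ENNReal.ofReal (C * (t ^ (α - 1) * ((1 - s) - t) ^ (b - 1)))
              = ∫⁻ t in Set.Ioc 0 (1 - s), ENNReal.ofReal C *
                ENNReal.ofReal (t ^ (α - 1) * ((1 - s) - t) ^ (b - 1)) := by
                apply lintegral_congr
                intro t
                rw [ENNReal.ofReal_mul hC0]
            _ = ENNReal.ofReal C * ∫⁻ t in Set.Ioc 0 (1 - s),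
                ENNReal.ofReal (t ^ (α - 1) * ((1 - s) - t) ^ (b - 1)) := by
                rw [lintegral_const_mul]
                fun_prop
            _ = ENNReal.ofReal C * ENNReal.ofReal
                ((1 - s) ^ (α + b - 1) * (Gamma α * Gamma b / Gamma (α + b))) := by
                rw [betaInt_lintegral hα0 hb hr]
            _ = T'.indicator (fun y => ENNReal.ofReal
                ((∏ j, y j ^ (a' j - 1)) * (1 - ∑ j, y j) ^ (α + b - 1) *
                  (Gamma α * Gamma b / Gamma (α + b)))) y := by
                rw [Set.indicator_of_mem (show y ∈ T' from hy), ← ENNReal.ofReal_mul hC0, ← hs, ← hC]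
                congr 1
                ring
        · have h0 : ∀ t : ℝ, T.indicator f (e.symm (t, y)) = 0 := by
            intro t
            rw [hesymm, Set.indicator_of_notMem]
            rw [hmem]
            rintro ⟨h1, h2, h3⟩
            exact hy ⟨h1, by linarith⟩
          simp only [h0, lintegral_const, zero_mul]
          rw [Set.indicator_of_notMem (show y ∉ T' from hy)]
      _ = (∫⁻ y in T', ENNReal.ofReal
            ((∏ j, y j ^ (a' j - 1)) * (1 - ∑ j, y j) ^ (α + b - 1))) *
            ENNReal.ofReal (Gamma α * Gamma b / Gamma (α + b)) := by
        rw [lintegral_indicator hT'm, ← lintegral_mul_const' _ _ (by simp)]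
        apply lintegral_congr
        intro y
        rw [ENNReal.ofReal_mul' (by positivity)]
      _ = ENNReal.ofReal ((∏ i, Gamma (a i)) * Gamma b / Gamma ((∑ i, a i) + b)) := by
        rw [IH a' (fun j => ha _) (α + b) hαb]
        have hsum' : 0 < (∑ j, a' j) + (α + b) := by
          have hsum : 0 ≤ ∑ j, a' j := Finset.sum_nonneg fun j _ => (ha _).le
          linarith
        have hpos : 0 ≤ (∏ j, Gamma (a' j)) * Gamma (α + b) / Gamma ((∑ j, a' j) + (α + b)) := by
          have hg1 : 0 < Gamma ((∑ j, a' j) + (α + b)) := Real.Gamma_pos_of_pos hsum'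
          have hg2 : 0 < Gamma (α + b) := Real.Gamma_pos_of_pos hαb
          have hg3 : 0 < ∏ j, Gamma (a' j) :=
            Finset.prod_pos fun j _ => Real.Gamma_pos_of_pos (ha _)
          positivity
        rw [← ENNReal.ofReal_mul hpos]
        congr 1
        have h1 : Gamma (α + b) ≠ 0 := (Real.Gamma_pos_of_pos hαb).ne'
        have h2 : Gamma ((∑ j, a' j) + (α + b)) ≠ 0 := by
          apply (Real.Gamma_pos_of_pos _).ne'
          have : ∀ j, 0 < a' j := fun j => ha _
          have hsum : 0 ≤ ∑ j, a' j := Finset.sum_nonneg fun j _ => (this j).le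
          linarith
        have hsum_eq : ∑ i, a i = (∑ j, a' j) + α := by
          rw [Fin.sum_univ_castSucc]
        have hprod_eq : ∏ i, Gamma (a i) = (∏ j, Gamma (a' j)) * Gamma α := by
          rw [Fin.prod_univ_castSucc]
        rw [hsum_eq, hprod_eq]
        have h3 : Gamma ((∑ j, a' j) + α + b) ≠ 0 := by
          rw [add_assoc]; exact h2
        field_simp
        ring

lemma dirichlet_integral (K : ℕ) (a : Fin K → ℝ) (ha : ∀ i, 0 < a i) (b : ℝ) (hb : 0 < b) :
    (∫ x in {x : Fin K → ℝ | (∀ i, 0 ≤ x i) ∧ ∑ i, x i ≤ 1},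
        (∏ i, x i ^ (a i - 1)) * (1 - ∑ i, x i) ^ (b - 1))
      = (∏ i, Gamma (a i)) * Gamma b / Gamma ((∑ i, a i) + b) := by
  have hm := simplex_measurableSet K
  rw [integral_eq_lintegral_of_nonneg_ae, dirichlet_lintegral K a ha b hb,
    ENNReal.toReal_ofReal]
  · have hg1 : 0 < Gamma ((∑ i, a i) + b) := by
      apply Real.Gamma_pos_of_pos
      have : 0 ≤ ∑ i, a i := Finset.sum_nonneg fun i _ => (ha i).le
      linarith
    have hg2 : 0 < Gamma b := Real.Gamma_pos_of_pos hb
    have hg3 : 0 < ∏ i, Gamma (a i) := Finset.prod_pos fun i _ => Real.Gamma_pos_of_pos (ha i)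
    positivity
  · refine ae_restrict_of_forall_mem hm fun x hx => ?_
    exact mul_nonneg (Finset.prod_nonneg fun i _ => Real.rpow_nonneg (hx.1 i) _)
      (Real.rpow_nonneg (by linarith [hx.2]) _)
  · exact (integrand_measurable a b).aestronglyMeasurable


/-- Integrating the Dirichlet(c) density against the multinomial likelihood of
topic-assignment counts `n` over the simplex yields the collapsed
(Dirichlet–multinomial, Pólya) marginal probability of the topic assignments. -/
theorem collapsed_dirichlet_multinomial_marginal
    (K : ℕ) (hK : 1 ≤ K) (c : Fin (K + 1) → ℝ) (hc : ∀ k, 0 < c k)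
    (n : Fin (K + 1) → ℕ) (S N : ℝ)
    (hS : S = ∑ k, c k) (hN : N = ∑ k, (n k : ℝ)) :
    (∫ x in {x : Fin K → ℝ | (∀ i, 0 ≤ x i) ∧ ∑ i, x i ≤ 1},
        (Real.Gamma S / ∏ k, Real.Gamma (c k)) *
          ((∏ i : Fin K, x i ^ ((n i.castSucc : ℝ) + c i.castSucc - 1)) *
            (1 - ∑ i, x i) ^ ((n (Fin.last K) : ℝ) + c (Fin.last K) - 1))) =
      (Real.Gamma S / ∏ k, Real.Gamma (c k)) *
        (∏ k, Real.Gamma ((n k : ℝ) + c k)) / Real.Gamma (N + S) := by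

  have ha : ∀ i : Fin K, 0 < (n i.castSucc : ℝ) + c i.castSucc := fun i =>
    add_pos_of_nonneg_of_pos (Nat.cast_nonneg _) (hc _)
  have hb : 0 < (n (Fin.last K) : ℝ) + c (Fin.last K) :=
    add_pos_of_nonneg_of_pos (Nat.cast_nonneg _) (hc _)
  have key := dirichlet_integral K (fun i => (n i.castSucc : ℝ) + c i.castSucc) ha
    ((n (Fin.last K) : ℝ) + c (Fin.last K)) hb
  rw [integral_const_mul, key]
  have hsum : (∑ i : Fin K, ((n i.castSucc : ℝ) + c i.castSucc))
      + ((n (Fin.last K) : ℝ) + c (Fin.last K)) = N + S := by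
    rw [← Fin.sum_univ_castSucc (f := fun k => (n k : ℝ) + c k), hN, hS,
      ← Finset.sum_add_distrib]
  have hprod : (∏ i : Fin K, Gamma ((n i.castSucc : ℝ) + c i.castSucc))
      * Gamma ((n (Fin.last K) : ℝ) + c (Fin.last K))
      = ∏ k, Gamma ((n k : ℝ) + c k) :=
    (Fin.prod_univ_castSucc (f := fun k => Gamma ((n k : ℝ) + c k))).symm
  rw [hsum, hprod]
  ring
end

section
/- Let K ≥ 1 and α > 0, let a, b : Fin K → ℕ with A = ∑_k a k and B = ∑_k b k, fix a topic j, and let b' = b + e_j (b with the j-th count incremented by one). With J and C as defined, C(b'∣a) / C(b∣a) = (a j + b j + α) / (A + B + K·α) and J(a, b') / J(a, b) = (a j + b j + α) / (A + B + K·α); in particular C(b'∣a)/C(b∣a) = J(a,b')/J(a,b), so the collapsed Gibbs sampling conditional for a topic assignment is identical under the conditional generative model and the joint generative model (Theorem 1). -/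
open Real Finset

/-- Joint generative (document-links) model's collapsed probability of a linked
pair of documents with topic counts `a` and `b` sharing one topic distribution. -/
noncomputable def polyaJ (K : ℕ) (α : ℝ) (a b : Fin K → ℕ) : ℝ :=
  (Real.Gamma (K * α) / Real.Gamma α ^ K) *
    (∏ k, Real.Gamma ((a k : ℝ) + (b k : ℝ) + α)) /
      Real.Gamma ((∑ k, (a k : ℝ)) + (∑ k, (b k : ℝ)) + K * α)

/-- Conditional generative model's collapsed probability of counts `a` given
counts `b`, arising from `θ ∼ Dirichlet(α + b)`. -/
noncomputable def polyaC (K : ℕ) (α : ℝ) (a b : Fin K → ℕ) : ℝ :=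
  (Real.Gamma ((∑ k, (b k : ℝ)) + K * α) / ∏ k, Real.Gamma ((b k : ℝ) + α)) *
    (∏ k, Real.Gamma ((a k : ℝ) + (b k : ℝ) + α)) /
      Real.Gamma ((∑ k, (a k : ℝ)) + (∑ k, (b k : ℝ)) + K * α)

/-- Incrementing the `j`-th topic count multiplies both the conditional
generative model's collapsed probability and the joint generative model's
collapsed probability by `(a j + b j + α)/(A + B + Kα)`; in particular the
collapsed Gibbs sampling conditional for a topic assignment is identical under
the two models (Theorem 1). -/
theorem gibbs_conditional_eq_of_conditional_and_joint
    (K : ℕ) (hK : 1 ≤ K) (α : ℝ) (hα : 0 < α) (a b : Fin K → ℕ)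
    (A B : ℝ) (hA : A = ∑ k, (a k : ℝ)) (hB : B = ∑ k, (b k : ℝ))
    (j : Fin K) (b' : Fin K → ℕ) (hb' : b' = Function.update b j (b j + 1)) :
    polyaC K α b' a / polyaC K α b a =
        ((a j : ℝ) + (b j : ℝ) + α) / (A + B + K * α) ∧
      polyaJ K α a b' / polyaJ K α a b =
        ((a j : ℝ) + (b j : ℝ) + α) / (A + B + K * α) ∧
      polyaC K α b' a / polyaC K α b a = polyaJ K α a b' / polyaJ K α a b := by
  subst hA hB hb'
  have hKpos : (0:ℝ) < K := by exact_mod_cast Nat.lt_of_lt_of_le Nat.zero_lt_one hK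
  have hKα : 0 < (K:ℝ) * α := mul_pos hKpos hα
  -- cast of update
  have hcast : ∀ k, ((Function.update b j (b j + 1) k : ℕ) : ℝ)
      = Function.update (fun k => (b k : ℝ)) j ((b j : ℝ) + 1) k := by
    intro k
    by_cases h : k = j
    · subst h; simp
    · simp [Function.update_of_ne h]
  have hsum : ∑ k, ((Function.update b j (b j + 1) k : ℕ) : ℝ)
      = (∑ k, (b k : ℝ)) + 1 := by
    simp only [hcast]
    rw [Finset.sum_update_of_mem (Finset.mem_univ j),
      Finset.sum_eq_sum_sdiff_singleton_add (Finset.mem_univ j) (fun k => (b k : ℝ))]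
    ring
  have hprodC : (∏ k, Real.Gamma (((Function.update b j (b j + 1) k : ℕ) : ℝ) + (a k : ℝ) + α))
      = ((a j : ℝ) + (b j : ℝ) + α) *
        ∏ k, Real.Gamma ((b k : ℝ) + (a k : ℝ) + α) := by
    have hfun : (fun k => Real.Gamma (((Function.update b j (b j + 1) k : ℕ) : ℝ) + (a k : ℝ) + α))
        = Function.update (fun k => Real.Gamma ((b k : ℝ) + (a k : ℝ) + α)) j
            (Real.Gamma (((b j : ℝ) + 1) + (a j : ℝ) + α)) := by
      funext k
      by_cases h : k = j
      · subst h; simp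
      · simp [Function.update_of_ne h]
    rw [hfun, Finset.prod_update_of_mem (Finset.mem_univ j),
      Finset.prod_eq_prod_diff_singleton_mul (Finset.mem_univ j)
        (fun k => Real.Gamma ((b k : ℝ) + (a k : ℝ) + α))]
    have : ((b j : ℝ) + 1) + (a j : ℝ) + α = ((b j : ℝ) + (a j : ℝ) + α) + 1 := by ring
    rw [this, Real.Gamma_add_one (s := (b j : ℝ) + (a j : ℝ) + α) (by positivity)]
    ring
  have hprodJ : (∏ k, Real.Gamma ((a k : ℝ) + ((Function.update b j (b j + 1) k : ℕ) : ℝ) + α))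
      = ((a j : ℝ) + (b j : ℝ) + α) *
        ∏ k, Real.Gamma ((a k : ℝ) + (b k : ℝ) + α) := by
    have hfun : (fun k => Real.Gamma ((a k : ℝ) + ((Function.update b j (b j + 1) k : ℕ) : ℝ) + α))
        = Function.update (fun k => Real.Gamma ((a k : ℝ) + (b k : ℝ) + α)) j
            (Real.Gamma ((a j : ℝ) + ((b j : ℝ) + 1) + α)) := by
      funext k
      by_cases h : k = j
      · subst h; simp
      · simp [Function.update_of_ne h]
    rw [hfun, Finset.prod_update_of_mem (Finset.mem_univ j),
      Finset.prod_eq_prod_diff_singleton_mul (Finset.mem_univ j)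
        (fun k => Real.Gamma ((a k : ℝ) + (b k : ℝ) + α))]
    have : (a j : ℝ) + ((b j : ℝ) + 1) + α = ((a j : ℝ) + (b j : ℝ) + α) + 1 := by ring
    rw [this, Real.Gamma_add_one (s := (a j : ℝ) + (b j : ℝ) + α) (by positivity)]
    ring
  set SA := ∑ k, (a k : ℝ) with hSA
  set SB := ∑ k, (b k : ℝ) with hSB
  have hSApos : 0 ≤ SA := Finset.sum_nonneg fun k _ => by positivity
  have hSBpos : 0 ≤ SB := Finset.sum_nonneg fun k _ => by positivity
  have hT : 0 < SA + SB + K * α := by positivity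
  have hGT : Real.Gamma (SA + SB + K * α) ≠ 0 := (Real.Gamma_pos_of_pos hT).ne'
  have hGT1 : Real.Gamma (SA + (SB + 1) + K * α)
      = (SA + SB + K * α) * Real.Gamma (SA + SB + K * α) := by
    have : SA + (SB + 1) + K * α = (SA + SB + K * α) + 1 := by ring
    rw [this, Real.Gamma_add_one hT.ne']
  have hGT1' : Real.Gamma ((SB + 1) + SA + K * α)
      = (SA + SB + K * α) * Real.Gamma (SB + SA + K * α) := by
    have h1 : (SB + 1) + SA + K * α = (SB + SA + K * α) + 1 := by ring
    have h2 : SB + SA + (K:ℝ) * α = SA + SB + K * α := by ring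
    rw [h1, h2, Real.Gamma_add_one hT.ne']
  have hPab : 0 < ∏ k, Real.Gamma ((a k : ℝ) + (b k : ℝ) + α) :=
    Finset.prod_pos fun k _ => Real.Gamma_pos_of_pos (by positivity)
  have hPba : 0 < ∏ k, Real.Gamma ((b k : ℝ) + (a k : ℝ) + α) :=
    Finset.prod_pos fun k _ => Real.Gamma_pos_of_pos (by positivity)
  have hPa : 0 < ∏ k, Real.Gamma ((a k : ℝ) + α) :=
    Finset.prod_pos fun k _ => Real.Gamma_pos_of_pos (by positivity)
  have hGa : 0 < Real.Gamma α := Real.Gamma_pos_of_pos hα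
  have hGSA : 0 < Real.Gamma (SA + K * α) := Real.Gamma_pos_of_pos (by positivity)
  have hGK : 0 < Real.Gamma (K * α) := Real.Gamma_pos_of_pos hKα
  have hx : 0 < (a j : ℝ) + (b j : ℝ) + α := by positivity
  have hC : polyaC K α (Function.update b j (b j + 1)) a / polyaC K α b a =
      ((a j : ℝ) + (b j : ℝ) + α) / (SA + SB + K * α) := by
    simp only [polyaC, hsum, hprodC, ← hSA, ← hSB, hGT1']
    field_simp
  have hJ : polyaJ K α a (Function.update b j (b j + 1)) / polyaJ K α a b =
      ((a j : ℝ) + (b j : ℝ) + α) / (SA + SB + K * α) := by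
    simp only [polyaJ, hsum, hprodJ, ← hSA, ← hSB, hGT1]
    field_simp
  exact ⟨hC, hJ, hC.trans hJ.symm⟩
end
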